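/- arXiv:1404.0612 — 3 statements merged into one kernel-verified Lean document; each statement's English description precedes it below -/
import Mathlib

section
/- Assume d > 0 and a = 1 - 2/√d (so that d(a-1)^2 - 4 = 0), c = b d, and 1 - b^2 d^3 > 0. Then the Jacobian of the FitzHugh–Nagumo system at the equilibrium ((1+a)/2, (1+a)/(2d), 0) has characteristic polynomial λ(λ^2 + (1 - b^2 d^3)/d); hence this point is a zero–Hopf equilibrium. -/
open Polynomial

/-- Jacobian of the FitzHugh–Nagumo vector field at the point (x, y, z). -/
def FHNJac (a b c d x : ℝ) : Matrix (Fin 3) (Fin 3) ℝ :=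
  !![0, 0, 1; b, -(b * d), 0; 3 * x ^ 2 - 2 * (a + 1) * x + a, 1, c]

theorem fhn_coincident_zero_hopf (a b c d : ℝ) (hd : 0 < d)
    (ha : a = 1 - 2 / Real.sqrt d) (hc : c = b * d)
    (h : 0 < 1 - b ^ 2 * d ^ 3) :
    (FHNJac a b c d ((1 + a) / 2)).charpoly =
      X * (X ^ 2 + C ((1 - b ^ 2 * d ^ 3) / d)) := by
  have hd0 : d ≠ 0 := ne_of_gt hd
  have hs : Real.sqrt d ≠ 0 := ne_of_gt (Real.sqrt_pos.mpr hd)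
  have hsq : (a - 1) ^ 2 = 4 / d := by
    rw [ha]
    have : (1 - 2 / Real.sqrt d - 1) ^ 2 = 4 / (Real.sqrt d ^ 2) := by
      field_simp; norm_num
    rw [this, Real.sq_sqrt hd.le]
  have hm : 3 * ((1 + a) / 2) ^ 2 - 2 * (a + 1) * ((1 + a) / 2) + a = -(d⁻¹) := by
    have h2 : 3 * ((1 + a) / 2) ^ 2 - 2 * (a + 1) * ((1 + a) / 2) + a
        = -((a - 1) ^ 2) / 4 := by ring
    rw [h2, hsq]
    field_simp
  have key : FHNJac a b c d ((1 + a) / 2) = !![0, 0, 1; b, -(b * d), 0; -(d⁻¹), 1, b * d] := by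
    rw [FHNJac, hm, hc]
  rw [key]
  rw [Matrix.charpoly, Matrix.det_fin_three]
  simp [Matrix.charmatrix_apply, Matrix.one_apply]
  have h1 : ((1 - b ^ 2 * d ^ 3) / d) = d⁻¹ - b ^ 2 * d ^ 2 := by field_simp
  rw [h1]
  simp only [map_sub, map_mul, map_pow]
  have e2 : (C d : ℝ[X]) * C d⁻¹ = 1 := by rw [← C_mul, mul_inv_cancel₀ hd0, map_one]
  linear_combination (C b : ℝ[X]) * e2
end

section
/- Assume d > 0 and d(a-1)^2 - 4 > 0, b = c = 0, and (a-1)²d + (a+1)√(d((a-1)²d - 4)) - 6 < 0. Then the characteristic polynomial of the Jacobian of the FitzHugh–Nagumo system at P_+ equals λ(λ² + ω²) where ω² = -((a-1)²d + (a+1)√(d((a-1)²d - 4)) - 6)/(2d) > 0; hence P_+ is a zero–Hopf equilibrium. -/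
open Polynomial

theorem fhn_Pplus_zero_hopf (a b c d : ℝ) (hd : 0 < d)
    (h : 0 < d * (a - 1) ^ 2 - 4) (hb : b = 0) (hc : c = 0)
    (hneg : (a - 1) ^ 2 * d + (a + 1) * Real.sqrt (d * ((a - 1) ^ 2 * d - 4)) - 6 < 0) :
    0 < -(((a - 1) ^ 2 * d + (a + 1) * Real.sqrt (d * ((a - 1) ^ 2 * d - 4)) - 6)
        / (2 * d)) ∧
    (FHNJac a b c d ((1 + a) / 2 + (1 / 2) * Real.sqrt ((a - 1) ^ 2 - 4 / d))).charpoly =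
      X * (X ^ 2 + C (-(((a - 1) ^ 2 * d
          + (a + 1) * Real.sqrt (d * ((a - 1) ^ 2 * d - 4)) - 6) / (2 * d)))) := by
  have hd0 : d ≠ 0 := ne_of_gt hd
  set s := Real.sqrt ((a - 1) ^ 2 - 4 / d) with hs
  have hnn : 0 ≤ (a - 1) ^ 2 - 4 / d := by
    rw [sub_nonneg, div_le_iff₀ hd]
    nlinarith
  have hs2 : s ^ 2 = (a - 1) ^ 2 - 4 / d := Real.sq_sqrt hnn
  have h1 : d * ((a - 1) ^ 2 * d - 4) = d ^ 2 * ((a - 1) ^ 2 - 4 / d) := by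
    field_simp
  have hds : Real.sqrt (d * ((a - 1) ^ 2 * d - 4)) = d * s := by
    rw [hs, h1, Real.sqrt_mul (sq_nonneg d), Real.sqrt_sq hd.le]
  constructor
  · rw [hds] at hneg
    rw [hds]
    exact neg_pos.mpr (div_neg_of_neg_of_pos hneg (by linarith))
  · subst hb hc
    set x : ℝ := (1 + a) / 2 + (1 / 2) * s with hx
    have hcp : (FHNJac a 0 0 d x).charpoly = X ^ 3 - C (3 * x ^ 2 - 2 * (a + 1) * x + a) * X := by
      rw [Matrix.charpoly, Matrix.det_fin_three]
      simp [FHNJac, Matrix.charmatrix_apply, Matrix.one_apply, Matrix.vecHead, Matrix.vecTail]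
      ring
    rw [hcp, hds]
    have key : 3 * x ^ 2 - 2 * (a + 1) * x + a =
        ((a - 1) ^ 2 * d + (a + 1) * (d * s) - 6) / (2 * d) := by
      have hs2' : d * s ^ 2 = d * (a - 1) ^ 2 - 4 := by
        rw [hs2]; field_simp
      rw [hx, eq_div_iff (by positivity : (2 : ℝ) * d ≠ 0)]
      linear_combination (3 / 2 : ℝ) * hs2'
    rw [key, map_neg]
    ring
end

section
/- Assume d > 0 and d(a-1)^2 - 4 > 0, b = c = 0, and (a-1)²d - (a+1)√(d((a-1)²d - 4)) - 6 < 0. Then the characteristic polynomial of the Jacobian of the FitzHugh–Nagumo system at P_- equals λ(λ² + ω²) where ω² = -((a-1)²d - (a+1)√(d((a-1)²d - 4)) - 6)/(2d) > 0; hence P_- is a zero–Hopf equilibrium. -/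
open Polynomial

/- With b = c = 0 the Jacobian is [[0,0,1],[0,0,0],[m,1,0]], where m is the slope of the cubic
nullcline at x, so its characteristic polynomial is λ(λ² - m). At P_- the abscissa x solves the
equilibrium equation x² - (a+1)x + a + 1/d = 0, which turns m into the stated expression; the
hypothesis on its sign says exactly that the two nonzero eigenvalues are ±iω. -/

theorem charpoly_FHNJac_zero_zero (a d x : ℝ) :
    (FHNJac a 0 0 d x).charpoly = X * (X ^ 2 - C (3 * x ^ 2 - 2 * (a + 1) * x + a)) := by
  rw [Matrix.charpoly, Matrix.det_fin_three]
  simp [FHNJac]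
  ring

theorem Real.sqrt_mul_sub_eq_mul_sqrt_sub_div {d : ℝ} (hd : 0 < d) (u v : ℝ) :
    √(d * (u * d - v)) = d * √(u - v / d) := by
  rw [show d * (u * d - v) = d ^ 2 * (u - v / d) by field_simp, Real.sqrt_mul (sq_nonneg d),
    Real.sqrt_sq hd.le]

theorem nullcline_slope_at_Pminus {a d s : ℝ} (hd : d ≠ 0) (hs : s ^ 2 = (a - 1) ^ 2 - 4 / d) :
    3 * ((1 + a) / 2 - (1 / 2) * s) ^ 2 - 2 * (a + 1) * ((1 + a) / 2 - (1 / 2) * s) + a =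
      ((a - 1) ^ 2 * d - (a + 1) * (d * s) - 6) / (2 * d) := by
  have hs_mul : s ^ 2 * d = (a - 1) ^ 2 * d - 4 := by
    rw [hs]
    field_simp
  field_simp
  linear_combination 3 * hs_mul

theorem fhn_Pminus_zero_hopf (a b c d : ℝ) (hd : 0 < d)
    (h : 0 < d * (a - 1) ^ 2 - 4) (hb : b = 0) (hc : c = 0)
    (hneg : (a - 1) ^ 2 * d - (a + 1) * Real.sqrt (d * ((a - 1) ^ 2 * d - 4)) - 6 < 0) :
    0 < -(((a - 1) ^ 2 * d - (a + 1) * Real.sqrt (d * ((a - 1) ^ 2 * d - 4)) - 6)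
        / (2 * d)) ∧
    (FHNJac a b c d ((1 + a) / 2 - (1 / 2) * Real.sqrt ((a - 1) ^ 2 - 4 / d))).charpoly =
      X * (X ^ 2 + C (-(((a - 1) ^ 2 * d
          - (a + 1) * Real.sqrt (d * ((a - 1) ^ 2 * d - 4)) - 6) / (2 * d)))) := by
  subst hb hc
  refine ⟨neg_pos.mpr (div_neg_of_neg_of_pos hneg (by positivity)), ?_⟩
  have hdisc : 0 ≤ (a - 1) ^ 2 - 4 / d := by
    rw [sub_nonneg, div_le_iff₀ hd]
    linarith
  rw [charpoly_FHNJac_zero_zero, Real.sqrt_mul_sub_eq_mul_sqrt_sub_div hd,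
    nullcline_slope_at_Pminus hd.ne' (Real.sq_sqrt hdisc), C_neg, ← sub_eq_add_neg]
end
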